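/- Let V be a real symmetric positive semidefinite (n+m)×(n+m) matrix with block form V = [[A, B], [Bᵀ, C]] where A is n×n and C is m×m. If V ≥ I (identity, in the Loewner order), then A − B·C⁺·Bᵀ ≥ I_n, where C⁺ denotes the Moore–Penrose pseudo-inverse of C. -/
import Mathlib


open Matrix

/-- The four Penrose conditions characterising the Moore–Penrose pseudo-inverse. -/
def IsMoorePenroseInv {m : ℕ} (C X : Matrix (Fin m) (Fin m) ℝ) : Prop :=
  C * X * C = C ∧ X * C * X = X ∧ (C * X)ᵀ = C * X ∧ (X * C)ᵀ = X * C

/-- Uniqueness of the Moore-Penrose inverse. -/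
lemma mp_unique {m : ℕ} {C X Y : Matrix (Fin m) (Fin m) ℝ}
    (hX : IsMoorePenroseInv C X) (hY : IsMoorePenroseInv C Y) : X = Y := by
  obtain ⟨hX1, hX2, hX3, hX4⟩ := hX
  obtain ⟨hY1, hY2, hY3, hY4⟩ := hY
  have key1 : X = X * C * Y := by
    have h1 : C * X = (C * X) * (C * Y) := by
      calc C * X = (C * X)ᵀ := hX3.symm
        _ = ((C * Y * C) * X)ᵀ := by rw [hY1]
        _ = (C * X)ᵀ * (C * Y)ᵀ := by
            simp [Matrix.transpose_mul, Matrix.mul_assoc]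
        _ = (C * X) * (C * Y) := by rw [hX3, hY3]
    calc X = X * C * X := hX2.symm
      _ = X * (C * X) := by rw [Matrix.mul_assoc]
      _ = X * ((C * X) * (C * Y)) := by rw [← h1]
      _ = (X * C * X) * (C * Y) := by noncomm_ring
      _ = X * C * Y := by rw [hX2, Matrix.mul_assoc]
  have key2 : Y = X * C * Y := by
    have h2 : Y * C = (X * C) * (Y * C) := by
      calc Y * C = (Y * C)ᵀ := hY4.symm
        _ = (Y * (C * X * C))ᵀ := by rw [hX1]
        _ = (X * C)ᵀ * (Y * C)ᵀ := by
            simp [Matrix.transpose_mul, Matrix.mul_assoc]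
        _ = (X * C) * (Y * C) := by rw [hX4, hY4]
    calc Y = Y * C * Y := hY2.symm
      _ = ((X * C) * (Y * C)) * Y := by rw [← h2]
      _ = X * C * (Y * C * Y) := by noncomm_ring
      _ = X * C * Y := by rw [hY2]
  rw [key1, ← key2]

lemma mp_symm {m : ℕ} {C Cp : Matrix (Fin m) (Fin m) ℝ} (hC : Cᵀ = C)
    (hCp : IsMoorePenroseInv C Cp) : Cpᵀ = Cp := by
  apply mp_unique _ hCp
  obtain ⟨h1, h2, h3, h4⟩ := hCp
  refine ⟨?_, ?_, ?_, ?_⟩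
  · calc C * Cpᵀ * C = Cᵀ * Cpᵀ * Cᵀ := by rw [hC]
      _ = (C * Cp * C)ᵀ := by simp [Matrix.transpose_mul, Matrix.mul_assoc]
      _ = C := by rw [h1, hC]
  · calc Cpᵀ * C * Cpᵀ = Cpᵀ * Cᵀ * Cpᵀ := by rw [hC]
      _ = (Cp * C * Cp)ᵀ := by simp [Matrix.transpose_mul, Matrix.mul_assoc]
      _ = Cpᵀ := by rw [h2]
  · calc (C * Cpᵀ)ᵀ = Cp * Cᵀ := by simp [Matrix.transpose_mul]
      _ = Cp * C := by rw [hC]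
      _ = (Cp * C)ᵀ := h4.symm
      _ = C * Cpᵀ := by simp [Matrix.transpose_mul, hC]
  · calc (Cpᵀ * C)ᵀ = Cᵀ * Cp := by simp [Matrix.transpose_mul]
      _ = C * Cp := by rw [hC]
      _ = (C * Cp)ᵀ := h3.symm
      _ = Cpᵀ * C := by simp [Matrix.transpose_mul, hC]

/-- If V = [[A, B], [Bᵀ, C]] is real symmetric positive semidefinite with V ≥ I in the
Loewner order, then the generalized Schur complement satisfies A − B·C⁺·Bᵀ ≥ I. -/
theorem stmt8 {n m : ℕ} (A : Matrix (Fin n) (Fin n) ℝ) (B : Matrix (Fin n) (Fin m) ℝ)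
    (C : Matrix (Fin m) (Fin m) ℝ) (hA : Aᵀ = A) (hC : Cᵀ = C)
    (hV : (Matrix.fromBlocks A B Bᵀ C).PosSemidef)
    (hVI : (Matrix.fromBlocks A B Bᵀ C - 1).PosSemidef)
    (Cp : Matrix (Fin m) (Fin m) ℝ) (hCp : IsMoorePenroseInv C Cp) :
    (A - B * Cp * Bᵀ - 1).PosSemidef := by
  have hCpT : Cpᵀ = Cp := mp_symm hC hCp
  obtain ⟨h1, h2, h3, h4⟩ := hCp
  set L : Matrix (Fin n ⊕ Fin m) (Fin n ⊕ Fin m) ℝ :=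
    Matrix.fromBlocks 1 0 (-(Cp * Bᵀ)) 1 with hL
  have hN : (Lᵀ * (Matrix.fromBlocks A B Bᵀ C - 1) * L).PosSemidef := by
    have := hVI.mul_mul_conjTranspose_same Lᵀ
    simpa using this
  -- the top-left block
  have hblock : (Lᵀ * (Matrix.fromBlocks A B Bᵀ C - 1) * L).toBlocks₁₁
      = A - B * Cp * Bᵀ - 1 - (B * Cp) * (B * Cp)ᵀ := by
    have hone : (1 : Matrix (Fin n ⊕ Fin m) (Fin n ⊕ Fin m) ℝ)
        = Matrix.fromBlocks 1 0 0 1 := (Matrix.fromBlocks_one).symm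
    have hCpCCp : Cp * (C * (Cp * Bᵀ)) = Cp * Bᵀ := by
      rw [← Matrix.mul_assoc, ← Matrix.mul_assoc, h2]
    rw [hL, hone, Matrix.fromBlocks_transpose]
    rw [show (Matrix.fromBlocks A B Bᵀ C - Matrix.fromBlocks 1 0 0 1)
        = Matrix.fromBlocks (A - 1) B Bᵀ (C - 1) by
      rw [sub_eq_add_neg, Matrix.fromBlocks_neg, Matrix.fromBlocks_add]
      simp [sub_eq_add_neg]]
    rw [Matrix.fromBlocks_multiply, Matrix.fromBlocks_multiply,
      Matrix.toBlocks_fromBlocks₁₁]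
    simp only [Matrix.transpose_neg, Matrix.transpose_mul, Matrix.transpose_transpose,
      hCpT, Matrix.transpose_one, Matrix.transpose_zero]
    simp only [Matrix.mul_one, Matrix.one_mul, Matrix.mul_zero, Matrix.zero_mul,
      Matrix.sub_mul, Matrix.mul_sub, Matrix.add_mul, Matrix.mul_neg, Matrix.neg_mul,
      Matrix.mul_assoc, hCpCCp, neg_neg, neg_sub, add_zero, zero_add]
    abel
  have hPSD1 : (A - B * Cp * Bᵀ - 1 - (B * Cp) * (B * Cp)ᵀ).PosSemidef := by
    rw [← hblock]
    exact hN.submatrix Sum.inl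
  have hPSD2 : ((B * Cp) * (B * Cp)ᵀ).PosSemidef := by
    have := Matrix.posSemidef_self_mul_conjTranspose (B * Cp)
    simpa using this
  have := hPSD1.add hPSD2
  simpa using this
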